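/- arXiv:2511.23412 — 2 statements merged into one kernel-verified Lean document; each statement's English description precedes it below -/
import Mathlib

section
/- Let p be a natural number and τ₀ ≤ τ₁ ≤ … ≤ τ_{p+1} a nondecreasing sequence of real numbers. For every index j with 0 ≤ j ≤ p such that τ_j < τ_{j+1}, there exists a real polynomial q in one variable of degree at most p such that B[τ₀,…,τ_{p+1}](x) = q(x) for all x ∈ [τ_j, τ_{j+1}) (the B-spline is a piecewise polynomial of degree at most p on the knot intervals). -/
/-!
On an interval `[l, r)` containing no knot in its interior, the degree-zero B-splines are
constant, and the recursion multiplies the two lower-degree B-splines (whose knots are among the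
original ones, so they still avoid `(l, r)`) by affine functions and adds. Hence by induction the
B-spline of degree `p` agrees with a polynomial of degree `≤ p` there. For nondecreasing knots,
every knot interval `[τ_j, τ_{j+1})` is such an interval.
-/

/-- The Cox–de Boor B-spline of degree `p` with local knot vector `τ₀, …, τ_{p+1}`. -/
noncomputable def coxDeBoor : (p : ℕ) → (Fin (p + 2) → ℝ) → ℝ → ℝ
  | 0, τ, x => if τ 0 ≤ x ∧ x < τ 1 then 1 else 0
  | p + 1, τ, x =>
      (if τ ⟨p + 1, by omega⟩ - τ 0 = 0 then 0
        else (x - τ 0) / (τ ⟨p + 1, by omega⟩ - τ 0) *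
          coxDeBoor p (fun i => τ i.castSucc) x) +
      (if τ ⟨p + 2, by omega⟩ - τ 1 = 0 then 0
        else (τ ⟨p + 2, by omega⟩ - x) / (τ ⟨p + 2, by omega⟩ - τ 1) *
          coxDeBoor p (fun i => τ i.succ) x)

open Polynomial Set

def IsPolynomialOn (n : ℕ) (s : Set ℝ) (f : ℝ → ℝ) : Prop :=
  ∃ q : ℝ[X], q.degree ≤ n ∧ ∀ x ∈ s, f x = q.eval x

namespace IsPolynomialOn

variable {m n : ℕ} {s : Set ℝ} {f g : ℝ → ℝ}

theorem congr (hf : IsPolynomialOn n s f) (h : ∀ x ∈ s, f x = g x) : IsPolynomialOn n s g :=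
  let ⟨q, hq, hfq⟩ := hf
  ⟨q, hq, fun x hx => (h x hx).symm.trans (hfq x hx)⟩

theorem const (c : ℝ) : IsPolynomialOn 0 s fun _ => c :=
  ⟨C c, degree_C_le, fun _ _ => (eval_C).symm⟩

theorem sub_div (c d : ℝ) : IsPolynomialOn 1 s fun x => (x - c) / d :=
  ⟨C d⁻¹ * (X - C c), by compute_degree!, fun x _ => by simp [div_eq_inv_mul]⟩

theorem sub_div' (c d : ℝ) : IsPolynomialOn 1 s fun x => (c - x) / d :=
  ⟨C d⁻¹ * (C c - X), by compute_degree!, fun x _ => by simp [div_eq_inv_mul]⟩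

theorem add (hf : IsPolynomialOn n s f) (hg : IsPolynomialOn n s g) :
    IsPolynomialOn n s (f + g) :=
  let ⟨p, hp, hfp⟩ := hf
  let ⟨q, hq, hgq⟩ := hg
  ⟨p + q, (degree_add_le p q).trans (max_le hp hq),
    fun x hx => by simp [hfp x hx, hgq x hx]⟩

theorem mul (hf : IsPolynomialOn m s f) (hg : IsPolynomialOn n s g) :
    IsPolynomialOn (m + n) s (f * g) :=
  let ⟨p, hp, hfp⟩ := hf
  let ⟨q, hq, hgq⟩ := hg
  ⟨p * q, by exact_mod_cast degree_mul_le_of_le hp hq,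
    fun x hx => by simp [hfp x hx, hgq x hx]⟩

end IsPolynomialOn

/-- The recursion's convention that a term with zero denominator vanishes agrees with
`x / 0 = 0`. -/
theorem coxDeBoor_succ (p : ℕ) (τ : Fin (p + 3) → ℝ) (x : ℝ) :
    coxDeBoor (p + 1) τ x =
      (x - τ 0) / (τ ⟨p + 1, by omega⟩ - τ 0) * coxDeBoor p (fun i => τ i.castSucc) x +
      (τ ⟨p + 2, by omega⟩ - x) / (τ ⟨p + 2, by omega⟩ - τ 1) *
        coxDeBoor p (fun i => τ i.succ) x := by
  rw [coxDeBoor]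
  split_ifs <;> simp_all

theorem mem_Ico_iff_of_notMem_Ioo {α : Type*} [LinearOrder α] {a b l r x : α}
    (ha : a ∉ Ioo l r) (hb : b ∉ Ioo l r) (hx : x ∈ Ico l r) :
    x ∈ Ico a b ↔ a ≤ l ∧ r ≤ b := by
  simp only [mem_Ioo, mem_Ico, not_and_or, not_lt] at *
  constructor
  · rintro ⟨hax, hxb⟩
    exact ⟨ha.resolve_right fun h => (h.trans hax).not_gt hx.2,
      hb.resolve_left fun h => (hxb.trans_le h).not_ge hx.1⟩
  · rintro ⟨hal, hrb⟩
    exact ⟨hal.trans hx.1, hx.2.trans_le hrb⟩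

theorem coxDeBoor_isPolynomialOn (p : ℕ) (τ : Fin (p + 2) → ℝ) {l r : ℝ}
    (hτ : ∀ i, τ i ∉ Ioo l r) : IsPolynomialOn p (Ico l r) (coxDeBoor p τ) := by
  induction p with
  | zero =>
    refine (IsPolynomialOn.const (if τ 0 ≤ l ∧ r ≤ τ 1 then 1 else 0)).congr fun x hx => ?_
    simp only [coxDeBoor, ← mem_Ico, mem_Ico_iff_of_notMem_Ioo (hτ 0) (hτ 1) hx]
  | succ p ih =>
    have h₁ := (ih (fun i => τ i.castSucc) fun i => hτ _).mul
      (IsPolynomialOn.sub_div (τ 0) (τ ⟨p + 1, by omega⟩ - τ 0))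
    have h₂ := (ih (fun i => τ i.succ) fun i => hτ _).mul
      (IsPolynomialOn.sub_div' (τ ⟨p + 2, by omega⟩) (τ ⟨p + 2, by omega⟩ - τ 1))
    refine (h₁.add h₂).congr fun x _ => ?_
    simp only [Pi.add_apply, Pi.mul_apply, coxDeBoor_succ]
    ring

theorem Monotone.apply_notMem_Ioo_castSucc_succ {α : Type*} [Preorder α] {n : ℕ}
    {f : Fin (n + 1) → α} (hf : Monotone f) (i : Fin (n + 1)) (j : Fin n) :
    f i ∉ Ioo (f j.castSucc) (f j.succ) := by
  rintro ⟨hji, hij⟩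
  rcases le_or_gt i j.castSucc with h | h
  · exact (hf h).not_gt hji
  · exact (hf (Fin.castSucc_lt_iff_succ_le.mp h)).not_gt hij

theorem coxDeBoor_piecewise_polynomial_general (p : ℕ) (τ : Fin (p + 2) → ℝ)
    (hτ : Monotone τ) (j : Fin (p + 1)) :
    ∃ q : Polynomial ℝ, q.degree ≤ p ∧
      ∀ x ∈ Set.Ico (τ j.castSucc) (τ j.succ), coxDeBoor p τ x = q.eval x :=
  coxDeBoor_isPolynomialOn p τ fun i => hτ.apply_notMem_Ioo_castSucc_succ i j

/-- The B-spline is a piecewise polynomial of degree at most `p` on the knot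
intervals: on each nonempty knot interval `[τ_j, τ_{j+1})` it agrees with a real
polynomial of degree at most `p`. -/
theorem coxDeBoor_piecewise_polynomial (p : ℕ) (τ : Fin (p + 2) → ℝ)
    (hτ : Monotone τ) (j : Fin (p + 1)) (hj : τ j.castSucc < τ j.succ) :
    ∃ q : Polynomial ℝ, q.degree ≤ p ∧
      ∀ x ∈ Set.Ico (τ j.castSucc) (τ j.succ), coxDeBoor p τ x = q.eval x :=
  coxDeBoor_piecewise_polynomial_general p τ hτ j
end

section
/- Let p be a natural number and let t₀ < t₁ < … < t_{2p+1} be a strictly increasing sequence of real numbers. For i = 0,…,p let N_i be the degree-p Cox–de Boor B-spline with local knot vector (t_i, t_{i+1}, …, t_{i+p+1}). Then the restrictions of N₀, N₁, …, N_p to the open interval (t_p, t_{p+1}) are linearly independent over ℝ (local linear independence of the p+1 B-splines covering a knot interval). -/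
namespace CDBAux

noncomputable def cdb : ℕ → (ℕ → ℝ) → ℝ → ℝ
  | 0, τ, x => if τ 0 ≤ x ∧ x < τ 1 then 1 else 0
  | (p+1), τ, x =>
      (if τ (p+1) - τ 0 = 0 then 0 else (x - τ 0)/(τ (p+1) - τ 0) * cdb p τ x) +
      (if τ (p+2) - τ 1 = 0 then 0 else (τ (p+2) - x)/(τ (p+2) - τ 1) * cdb p (fun n => τ (n+1)) x)

theorem cdb_congr : ∀ (p : ℕ) (τ σ : ℕ → ℝ) (x : ℝ), (∀ n, n ≤ p+1 → τ n = σ n) →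
    cdb p τ x = cdb p σ x
  | 0, τ, σ, x, h => by rw [cdb, cdb, h 0 (by omega), h 1 (by omega)]
  | (p+1), τ, σ, x, h => by
      rw [cdb, cdb, cdb_congr p τ σ x (fun n hn => h n (by omega)),
        cdb_congr p (fun n => τ (n+1)) (fun n => σ (n+1)) x (fun n hn => h (n+1) (by omega)),
        h 0 (by omega), h 1 (by omega), h (p+1) (by omega), h (p+2) (by omega)]

theorem coxDeBoor_eq_cdb : ∀ (p : ℕ) (τ : Fin (p+2) → ℝ) (σ : ℕ → ℝ),
    (∀ n, (hn : n ≤ p+1) → σ n = τ ⟨n, by omega⟩) → ∀ x, coxDeBoor p τ x = cdb p σ x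
  | 0, τ, σ, h, x => by
      rw [coxDeBoor, cdb, h 0 (by omega), h 1 (by omega)]
      have e0 : (0 : Fin 2) = ⟨0, by omega⟩ := rfl
      have e1 : (1 : Fin 2) = ⟨1, by omega⟩ := rfl
      rw [e0, e1]
  | (p+1), τ, σ, h, x => by
      rw [coxDeBoor, cdb,
        coxDeBoor_eq_cdb p (fun i => τ i.castSucc) σ
          (fun n hn => by show σ n = τ (Fin.castSucc ⟨n, by omega⟩); rw [h n (by omega), Fin.castSucc_mk]) x,
        coxDeBoor_eq_cdb p (fun i => τ i.succ) (fun n => σ (n+1))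
          (fun n hn => by show σ (n+1) = τ (Fin.succ ⟨n, by omega⟩); rw [h (n+1) (by omega), Fin.succ_mk]) x,
        h 0 (by omega), h 1 (by omega), h (p+1) (by omega), h (p+2) (by omega)]
      have e0 : (0 : Fin (p+3)) = ⟨0, by omega⟩ := by ext; simp
      have e1 : (1 : Fin (p+3)) = ⟨1, by omega⟩ := by ext; simp
      rw [e0, e1]

theorem cdb_support_right : ∀ (p : ℕ) (τ : ℕ → ℝ) (x : ℝ), Monotone τ → τ (p+1) ≤ x →
    cdb p τ x = 0
  | 0, τ, x, hm, h => by rw [cdb, if_neg]; rintro ⟨h1, h2⟩; linarith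
  | (p+1), τ, x, hm, h => by
      rw [cdb, cdb_support_right p τ x hm (le_trans (hm (by omega : p+1 ≤ p+2)) h),
        cdb_support_right p (fun n => τ (n+1)) x (fun a b hab => hm (by omega)) h]
      simp

theorem cdb_support_left : ∀ (p : ℕ) (τ : ℕ → ℝ) (x : ℝ), Monotone τ → x < τ 0 →
    cdb p τ x = 0
  | 0, τ, x, hm, h => by rw [cdb, if_neg]; rintro ⟨h1, h2⟩; linarith
  | (p+1), τ, x, hm, h => by
      rw [cdb, cdb_support_left p τ x hm h,
        cdb_support_left p (fun n => τ (n+1)) x (fun a b hab => hm (by omega))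
          (lt_of_lt_of_le h (hm (by omega : 0 ≤ 1)))]
      simp

theorem marsden : ∀ (p : ℕ) (t : ℕ → ℝ), Monotone t →
    (∀ m n : ℕ, m < n → n ≤ 2*p+1 → t m < t n) →
    ∀ x : ℝ, t p < x → x < t (p+1) → ∀ y : ℝ,
    ∑ i ∈ Finset.range (p+1),
      (∏ j ∈ Finset.range p, (y - t (i+1+j))) * cdb p (fun n => t (i+n)) x = (y-x)^p
  | 0, t, hm, hs, x, hx, hx', y => by
      rw [Finset.sum_range_one, Finset.prod_range_zero, one_mul, pow_zero, cdb, if_pos]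
      constructor
      · simpa using le_of_lt hx
      · simpa using hx'
  | (p+1), t, hm, hs, x, hx, hx', y => by
      have hx2 : x < t (p+2) := by simpa [show p+1+1 = p+2 from by omega] using hx'
      show ∑ i ∈ Finset.range (p+2),
          (∏ j ∈ Finset.range (p+1), (y - t (i+1+j))) * cdb (p+1) (fun n => t (i+n)) x
        = (y-x)^(p+1)
      set M : ℕ → ℝ := fun i => cdb p (fun n => t (i+n)) x with hM
      have hMshift : ∀ i : ℕ, cdb p (fun n => t (i + (n+1))) x = M (i+1) := by
        intro i
        apply cdb_congr
        intro n hn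
        congr 1
        omega
      have expand : ∀ i, i ≤ p+1 → cdb (p+1) (fun n => t (i+n)) x =
          (x - t i)/(t (i+p+1) - t i) * M i
          + (t (i+p+2) - x)/(t (i+p+2) - t (i+1)) * M (i+1) := by
        intro i hi
        have d1 : t (i+(p+1)) - t (i+0) ≠ 0 :=
          sub_ne_zero.mpr (ne_of_gt (hs (i+0) (i+(p+1)) (by omega) (by omega)))
        have d2 : t (i+(p+2)) - t (i+1) ≠ 0 :=
          sub_ne_zero.mpr (ne_of_gt (hs (i+1) (i+(p+2)) (by omega) (by omega)))
        rw [cdb, if_neg d1, if_neg d2, hMshift i]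
        rw [show i+(p+1) = i+p+1 from by omega, show i+(p+2) = i+p+2 from by omega,
          show i+0 = i from by omega]
      have step1 : ∑ i ∈ Finset.range (p+2),
            (∏ j ∈ Finset.range (p+1), (y - t (i+1+j))) * cdb (p+1) (fun n => t (i+n)) x
          = ∑ i ∈ Finset.range (p+2),
            ((∏ j ∈ Finset.range (p+1), (y - t (i+1+j))) * ((x - t i)/(t (i+p+1) - t i)) * M i
            + (∏ j ∈ Finset.range (p+1), (y - t (i+1+j))) * ((t (i+p+2) - x)/(t (i+p+2) - t (i+1))) * M (i+1)) := by
        apply Finset.sum_congr rfl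
        intro i hi
        have hi' : i ≤ p+1 := by have := Finset.mem_range.mp hi; omega
        rw [expand i hi']
        ring
      have hM0 : M 0 = 0 := by
        show cdb p (fun n => t (0+n)) x = 0
        rw [cdb_congr p _ t x (fun n hn => by norm_num)]
        exact cdb_support_right p t x hm (le_of_lt hx)
      have hMtop : M (p+1+1) = 0 := by
        show cdb p (fun n => t (p+1+1+n)) x = 0
        exact cdb_support_left p _ x (fun a b hab => hm (by omega))
          (by simpa [show p+1+1+0 = p+2 from by omega] using hx2)
      rw [step1, Finset.sum_add_distrib,
        Finset.sum_range_succ' (fun i => (∏ j ∈ Finset.range (p+1), (y - t (i+1+j))) * ((x - t i)/(t (i+p+1) - t i)) * M i) (p+1),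
        Finset.sum_range_succ (fun i => (∏ j ∈ Finset.range (p+1), (y - t (i+1+j))) * ((t (i+p+2) - x)/(t (i+p+2) - t (i+1))) * M (i+1)) (p+1)]
      rw [hM0, hMtop, mul_zero, mul_zero, add_zero, add_zero, ← Finset.sum_add_distrib]
      have key : ∀ i, i ≤ p →
          (∏ j ∈ Finset.range (p+1), (y - t (i+1+1+j))) * ((x - t (i+1))/(t (i+1+p+1) - t (i+1))) * M (i+1)
          + (∏ j ∈ Finset.range (p+1), (y - t (i+1+j))) * ((t (i+p+2) - x)/(t (i+p+2) - t (i+1))) * M (i+1)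
          = (y - x) * ((∏ j ∈ Finset.range p, (y - t (i+2+j))) * M (i+1)) := by
        intro i hi
        have hψ1 : (∏ j ∈ Finset.range (p+1), (y - t (i+1+1+j)))
            = (∏ j ∈ Finset.range p, (y - t (i+2+j))) * (y - t (i+p+2)) := by
          rw [Finset.prod_range_succ]
          simp only [show ∀ j:ℕ, i+1+1+j = i+2+j from fun j => by omega,
            show i+2+p = i+p+2 from by omega]
        have hψ0 : (∏ j ∈ Finset.range (p+1), (y - t (i+1+j)))
            = (∏ j ∈ Finset.range p, (y - t (i+2+j))) * (y - t (i+1)) := by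
          rw [Finset.prod_range_succ']
          simp only [show ∀ k:ℕ, i+1+(k+1) = i+2+k from fun k => by omega,
            show i+1+0 = i+1 from by omega]
        have d : t (i+p+2) - t (i+1) ≠ 0 :=
          sub_ne_zero.mpr (ne_of_gt (hs (i+1) (i+p+2) (by omega) (by omega)))
        rw [hψ1, hψ0, show i+1+p+1 = i+p+2 from by omega]
        field_simp
        ring
      rw [Finset.sum_congr rfl (fun i hi => key i (by have := Finset.mem_range.mp hi; omega)),
        ← Finset.mul_sum]
      have ih := marsden p (fun n => t (n+1)) (fun a b hab => hm (by omega))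
        (fun m n hmn hn => hs (m+1) (n+1) (by omega) (by omega)) x
        (by simpa using hx) (by simpa [show p+1+1 = p+2 from by omega] using hx2) y
      have conv : ∑ i ∈ Finset.range (p+1), (∏ j ∈ Finset.range p, (y - t (i+2+j))) * M (i+1)
          = ∑ i ∈ Finset.range (p+1), (∏ j ∈ Finset.range p, (y - t (i+1+j+1))) * cdb p (fun n => t (i+n+1)) x := by
        apply Finset.sum_congr rfl
        intro i hi
        have h1 : (∏ j ∈ Finset.range p, (y - t (i+2+j)))
            = ∏ j ∈ Finset.range p, (y - t (i+1+j+1)) := by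
          apply Finset.prod_congr rfl
          intro j hj
          rw [show i+2+j = i+1+j+1 from by omega]
        have h2 : M (i+1) = cdb p (fun n => t (i+n+1)) x := by
          show cdb p (fun n => t (i+1+n)) x = _
          apply cdb_congr
          intro n hn
          congr 1
          omega
        rw [h1, h2]
      rw [conv]
      rw [show (∑ i ∈ Finset.range (p+1), (∏ j ∈ Finset.range p, (y - t (i+1+j+1))) * cdb p (fun n => t (i+n+1)) x) = (y-x)^p from by rw [← ih]]
      ring

end CDBAux

open Polynomial

/-- Local linear independence of the `p + 1` B-splines covering a knot interval:
given strictly increasing knots `t₀ < … < t_{2p+1}`, the degree-`p` B-splines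
`N_i` with local knot vectors `(t_i, …, t_{i+p+1})`, `i = 0, …, p`, restricted to
the open interval `(t_p, t_{p+1})`, are linearly independent over `ℝ`. -/
theorem coxDeBoor_local_linear_independence (p : ℕ) (t : Fin (2 * p + 2) → ℝ)
    (ht : StrictMono t)
    (N : Fin (p + 1) → ℝ → ℝ)
    (hN : ∀ i : Fin (p + 1), N i = coxDeBoor p
      (fun j : Fin (p + 2) => t ⟨i.val + j.val, by have h1 := i.isLt; have h2 := j.isLt; omega⟩)) :
    LinearIndependent ℝ (fun i : Fin (p + 1) =>
      (Set.Ioo (t ⟨p, by omega⟩) (t ⟨p + 1, by omega⟩)).restrict (N i)) := by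
  classical
  have hab : t ⟨p, by omega⟩ < t ⟨p + 1, by omega⟩ := ht (by simp [Fin.mk_lt_mk])
  set U : Set ℝ := Set.Ioo (t ⟨p, by omega⟩) (t ⟨p + 1, by omega⟩) with hU
  set f : Fin (p+1) → (U → ℝ) := fun i => U.restrict (N i) with hf
  show LinearIndependent ℝ f
  -- ℕ-indexed knots
  set t' : ℕ → ℝ := fun n => t ⟨min n (2*p+1), by omega⟩ with ht'
  have hmono : Monotone t' := fun m n h => ht.monotone (by simp [Fin.mk_le_mk]; omega)
  have hstrict : ∀ m n : ℕ, m < n → n ≤ 2*p+1 → t' m < t' n := by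
    intro m n h hn
    apply ht
    simp only [Fin.mk_lt_mk]
    omega
  have hta : t' p = t ⟨p, by omega⟩ := by
    show t ⟨min p (2*p+1), by omega⟩ = _
    congr 1
    apply Fin.ext
    simp
    omega
  have htb : t' (p+1) = t ⟨p+1, by omega⟩ := by
    show t ⟨min (p+1) (2*p+1), by omega⟩ = _
    congr 1
    apply Fin.ext
    simp
    omega
  have hNt : ∀ (i : Fin (p+1)) (x : ℝ), N i x = CDBAux.cdb p (fun n => t' ((i:ℕ) + n)) x := by
    intro i x
    rw [hN i]
    apply CDBAux.coxDeBoor_eq_cdb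
    intro n hn
    show t ⟨min ((i:ℕ)+n) (2*p+1), by omega⟩ = t ⟨(i:ℕ) + n, by have := i.isLt; omega⟩
    congr 1
    apply Fin.ext
    have := i.isLt
    simp
    omega
  have key : ∀ x : ℝ, x ∈ U → ∀ y : ℝ,
      ∑ i : Fin (p+1), (∏ j ∈ Finset.range p, (y - t' ((i:ℕ)+1+j))) * N i x = (y-x)^p := by
    intro x hx y
    have hx1 : t' p < x := by rw [hta]; exact hx.1
    have hx2 : x < t' (p+1) := by rw [htb]; exact hx.2
    have := CDBAux.marsden p t' hmono hstrict x hx1 hx2 y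
    rw [← Fin.sum_univ_eq_sum_range
      (fun k => (∏ j ∈ Finset.range p, (y - t' (k+1+j))) * CDBAux.cdb p (fun n => t' (k+n)) x) (p+1)] at this
    rw [← this]
    apply Finset.sum_congr rfl
    intro i _
    rw [hNt i x]
  -- polynomial identity
  set Ψ : Fin (p+1) → ℝ[X] := fun i => ∏ j ∈ Finset.range p, (X - C (t' ((i:ℕ)+1+j))) with hΨ
  have hpoly : ∀ x : ℝ, x ∈ U →
      (∑ i : Fin (p+1), C (N i x) * Ψ i) = (X - C x)^p := by
    intro x hx
    apply Polynomial.funext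
    intro y
    rw [Polynomial.eval_finset_sum]
    simp only [hΨ, eval_mul, eval_C, eval_prod, eval_sub, eval_X, eval_pow]
    rw [Finset.sum_congr rfl (fun i _ => mul_comm (N i x) _)]
    exact key x hx y
  -- coefficient extraction: monomials are in the span
  have hcoeff : ∀ (m : Fin (p+1)) (x : ℝ), x ∈ U →
      ∑ i : Fin (p+1), (Ψ i).coeff (p - (m:ℕ)) * N i x
        = ((-1:ℝ)^(m:ℕ) * (p.choose (p - (m:ℕ)) : ℝ)) * x^(m:ℕ) := by
    intro m x hx
    have h1 := congrArg (fun q : ℝ[X] => q.coeff (p - (m:ℕ))) (hpoly x hx)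
    simp only [Polynomial.finset_sum_coeff, Polynomial.coeff_C_mul] at h1
    rw [sub_eq_add_neg, ← C_neg, Polynomial.coeff_X_add_C_pow] at h1
    have hm : p - (p - (m:ℕ)) = (m:ℕ) := by have := m.isLt; omega
    rw [hm] at h1
    rw [Finset.sum_congr rfl (fun i _ => mul_comm ((Ψ i).coeff (p - (m:ℕ))) (N i x))]
    rw [h1, neg_pow]
    ring
  set W : Submodule ℝ (U → ℝ) := Submodule.span ℝ (Set.range f) with hW
  set g : Fin (p+1) → (U → ℝ) := fun m z => (z:ℝ)^(m:ℕ) with hg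
  have hgW : ∀ m : Fin (p+1), g m ∈ W := by
    intro m
    have hc : ((-1:ℝ)^(m:ℕ) * (p.choose (p - (m:ℕ)) : ℝ)) ≠ 0 := by
      apply mul_ne_zero
      · exact pow_ne_zero _ (by norm_num)
      · have := m.isLt
        exact_mod_cast Nat.cast_ne_zero.mpr (Nat.choose_pos (by omega : p - (m:ℕ) ≤ p)).ne'
    have hrepr : g m = ((-1:ℝ)^(m:ℕ) * (p.choose (p - (m:ℕ)) : ℝ))⁻¹ •
        ∑ i : Fin (p+1), (Ψ i).coeff (p - (m:ℕ)) • f i := by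
      funext z
      have hz := z.2
      have := hcoeff m (z:ℝ) hz
      simp only [hg, Pi.smul_apply, smul_eq_mul, Finset.sum_apply]
      rw [show ∑ i : Fin (p+1), (Ψ i).coeff (p - (m:ℕ)) * f i z
          = ∑ i : Fin (p+1), (Ψ i).coeff (p-(m:ℕ)) * N i (z:ℝ) from rfl, this,
        inv_mul_cancel_left₀ hc]
    rw [hrepr]
    apply Submodule.smul_mem
    apply Submodule.sum_smul_mem
    intro i _
    exact Submodule.subset_span (Set.mem_range_self i)
  have hg_li : LinearIndependent ℝ g := by
    rw [Fintype.linearIndependent_iff]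
    intro c hc m
    set q : ℝ[X] := ∑ m : Fin (p+1), C (c m) * X^(m:ℕ) with hq
    have hroot : ∀ z : ℝ, z ∈ U → q.eval z = 0 := by
      intro z hz
      have := congrFun hc (⟨z, hz⟩ : U)
      simp only [Finset.sum_apply, Pi.smul_apply, smul_eq_mul, Pi.zero_apply, hg] at this
      rw [hq, Polynomial.eval_finset_sum]
      simpa using this
    have hq0 : q = 0 := by
      apply Polynomial.eq_zero_of_infinite_isRoot
      apply Set.Infinite.mono (fun z hz => hroot z hz : U ⊆ {z : ℝ | q.IsRoot z})
      exact Set.Ioo_infinite hab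
    have := congrArg (fun r : ℝ[X] => r.coeff (m:ℕ)) hq0
    simp only [hq, Polynomial.finset_sum_coeff, Polynomial.coeff_C_mul,
      Polynomial.coeff_X_pow, Polynomial.coeff_zero] at this
    rw [Finset.sum_eq_single m] at this
    · simpa using this
    · intro i _ hne
      rw [if_neg (by simpa [Fin.val_eq_val] using Ne.symm hne), mul_zero]
    · intro habs
      exact absurd (Finset.mem_univ m) habs
  -- dimension count
  haveI : Module.Finite ℝ W := FiniteDimensional.span_of_finite ℝ (Set.finite_range f)
  rw [linearIndependent_iff_card_eq_finrank_span]
  have h1 : (Set.range f).finrank ℝ ≤ p+1 := by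
    simpa using finrank_range_le_card f
  have h2 : p+1 ≤ (Set.range f).finrank ℝ := by
    have hle : Submodule.span ℝ (Set.range g) ≤ W := by
      rw [Submodule.span_le]
      rintro _ ⟨m, rfl⟩
      exact hgW m
    have := Submodule.finrank_mono hle
    rw [finrank_span_eq_card hg_li] at this
    simpa [Set.finrank] using this
  simp only [Fintype.card_fin]
  omega
end
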